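/- arXiv:1304.7213 — 3 statements merged into one kernel-verified Lean document; each statement's English description precedes it below -/
import Mathlib

section
/- Let Π be a connected small groupoid with a group Γ acting on it, and let x be an object of Π. Then the map Q(Π,Γ)(x,x) → Γ sending (σ,α) to σ is a surjective group homomorphism whose kernel is isomorphic to Π(x,x). In particular there is a short exact sequence 1 → Π(x,x) → Q(Π,Γ,x) → Γ → 1. -/
open CategoryTheory

/-- An action of a group `Γ` on a groupoid `C` by functors. -/
structure GroupoidAction (Γ : Type*) [Group Γ] (C : Type*) [Groupoid C] where
  act : Γ → C ⥤ C
  act_one : act 1 = Functor.id C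
  act_mul : ∀ σ τ : Γ, act (σ * τ) = act τ ⋙ act σ

variable {Γ : Type*} [Group Γ] {C : Type*} [Groupoid C]

/-- Morphisms of the Grothendieck construction `Q(Π,Γ)`: pairs `(σ, α)` with
`α : σ(x) ⟶ y`. -/
def QHom (A : GroupoidAction Γ C) (x y : C) : Type _ :=
  (σ : Γ) × ((A.act σ).obj x ⟶ y)

/-- The identity morphism of `Q(Π,Γ)`. -/
def Qid (A : GroupoidAction Γ C) (x : C) : QHom A x x :=
  ⟨1, eqToHom (by rw [A.act_one]; rfl)⟩

/-- Composition in `Q(Π,Γ)`: `(σ,α) ∘ (τ,β) = (στ, α ∘ σ(β))` (the morphism `g = (τ,β)`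
is applied first). -/
def Qcomp {A : GroupoidAction Γ C} {x y z : C} (f : QHom A y z) (g : QHom A x y) :
    QHom A x z :=
  ⟨f.1 * g.1, eqToHom (by rw [A.act_mul]; rfl) ≫ (A.act f.1).map g.2 ≫ f.2⟩

/-- The embedding of `Π(x,x)` into `Q(Π,Γ,x)` as the pairs `(1, α)`. -/
def Qof (A : GroupoidAction Γ C) {x : C} (α : x ⟶ x) : QHom A x x :=
  ⟨1, eqToHom (by rw [A.act_one]; rfl) ≫ α⟩

/-- The section of `Q(Π,Γ,x) → Γ` associated to a `Γ`-fixed object `y` and an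
isomorphism `φ : x ⟶ y`, namely `σ ↦ (σ, φ⁻¹ ∘ σ(φ))`. -/
def Qsection (A : GroupoidAction Γ C) {x y : C} (hy : ∀ σ : Γ, (A.act σ).obj y = y)
    (φ : x ⟶ y) (σ : Γ) : QHom A x x :=
  ⟨σ, (A.act σ).map φ ≫ eqToHom (hy σ) ≫ Groupoid.inv φ⟩

/-! A morphism `(σ, α) : x ⟶ y` of `Q(Π,Γ)` exists for every `σ` because `Π` is connected,
and since `act 1 = 𝟭` the fibre over `1` is `Π((act 1).obj x, x) = Π(x, x)`; the rest is
bookkeeping of the `eqToHom` transports between `(act 1).obj x` and `x`. -/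

theorem QHom.ext {A : GroupoidAction Γ C} {x y : C} {f g : QHom A x y} (h₁ : f.1 = g.1)
    (h₂ : f.2 = eqToHom (by rw [h₁]) ≫ g.2) : f = g := by
  obtain ⟨σ, α⟩ := f
  obtain ⟨τ, β⟩ := g
  obtain rfl : σ = τ := h₁
  simp only [eqToHom_refl, Category.id_comp] at h₂
  rw [h₂]

theorem QHom.exists_fst_eq (A : GroupoidAction Γ C) {x y : C}
    (hconn : ∀ x y : C, Nonempty (x ⟶ y)) (σ : Γ) : ∃ f : QHom A x y, f.1 = σ :=
  let ⟨α⟩ := hconn ((A.act σ).obj x) y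
  ⟨⟨σ, α⟩, rfl⟩

theorem Qcomp_fst {A : GroupoidAction Γ C} {x y z : C} (f : QHom A y z) (g : QHom A x y) :
    (Qcomp f g).1 = f.1 * g.1 :=
  rfl

theorem Qof_injective (A : GroupoidAction Γ C) (x : C) :
    Function.Injective (fun α : x ⟶ x => Qof A α) := by
  intro α β h
  injection h with _ h
  exact (cancel_epi _).mp h

theorem Qcomp_Qof (A : GroupoidAction Γ C) {x : C} (α β : x ⟶ x) :
    Qcomp (Qof A α) (Qof A β) = Qof A (β ≫ α) := by
  refine QHom.ext (one_mul 1) ?_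
  simp only [Qof, Qcomp, Functor.map_comp, eqToHom_map, Functor.congr_hom A.act_one β,
    Functor.id_obj, Functor.id_map, eqToHom_trans_assoc, Category.assoc, eqToHom_refl,
    Category.id_comp]
  erw [eqToHom_trans_assoc]

theorem Qof_id (A : GroupoidAction Γ C) (x : C) : Qof A (𝟙 x) = Qid A x := by
  simp only [Qof, Category.comp_id, Qid]
  rfl

theorem range_Qof (A : GroupoidAction Γ C) (x : C) :
    Set.range (fun α : x ⟶ x => Qof A α) = {f : QHom A x x | f.1 = 1} := by
  ext ⟨σ, β⟩
  constructor
  · rintro ⟨α, h⟩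
    exact congrArg Sigma.fst h.symm
  · rintro (rfl : σ = 1)
    exact ⟨eqToHom (by rw [A.act_one]; rfl) ≫ β, QHom.ext rfl (by simp only [Qof, eqToHom_trans_assoc])⟩

/-- For a connected groupoid `Π` with an action of `Γ` and an object `x`,
the projection `Q(Π,Γ,x) → Γ`, `(σ,α) ↦ σ`, is surjective and multiplicative, and its
kernel (the fibre over `1 ∈ Γ`) is identified with `Π(x,x)` via the embedding
`α ↦ (1,α)`, which is injective, multiplicative and has exactly the fibre over `1` as
its range.  In other words we have a short exact sequence
`1 → Π(x,x) → Q(Π,Γ,x) → Γ → 1`. -/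
theorem grothendieck_exact_sequence (A : GroupoidAction Γ C)
    (hconn : ∀ x y : C, Nonempty (x ⟶ y)) (x : C) :
    -- the projection is surjective
    (∀ σ : Γ, ∃ f : QHom A x x, f.1 = σ) ∧
    -- the projection is a homomorphism of groups
    (∀ f g : QHom A x x, (Qcomp f g).1 = f.1 * g.1) ∧
    -- the embedding of Π(x,x) is an injective homomorphism
    Function.Injective (fun α : x ⟶ x => Qof A α) ∧
    (∀ α β : x ⟶ x, Qcomp (Qof A α) (Qof A β) = Qof A (β ≫ α)) ∧
    (Qof A (𝟙 x) = Qid A x) ∧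
    -- its range is exactly the kernel of the projection
    (Set.range (fun α : x ⟶ x => Qof A α) = {f : QHom A x x | f.1 = 1}) := by
  exact ⟨fun σ => QHom.exists_fst_eq A hconn σ, Qcomp_fst, Qof_injective A x, Qcomp_Qof A,
    Qof_id A x, range_Qof A x⟩
end

section
/- For the action of ℤ/2 on the 2-sphere S² by the antipodal map, the fixed point set (S²)^{ℤ/2} is empty, while the set of conjugacy classes of sections of the associated Grothendieck exact sequence 1 → π₁(S²,x) → Q(Π₁(S²), ℤ/2, x) → ℤ/2 → 1 is a singleton (since π₁(S²,x) is trivial). Hence the section map π₀((S²)^{ℤ/2}) → Sec(Π₁(S²), ℤ/2) is not surjective. -/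
open CategoryTheory

variable {Γ : Type*} [Group Γ] {C : Type*} [Groupoid C]

/-- The 2-sphere, as the unit sphere in `ℝ³`. -/
noncomputable abbrev TwoSphere : Type := Metric.sphere (0 : EuclideanSpace ℝ (Fin 3)) 1

/-- The antipodal involution of the 2-sphere. -/
noncomputable def antipodal (x : TwoSphere) : TwoSphere :=
  ⟨-(x : EuclideanSpace ℝ (Fin 3)), by
    have := x.2
    simp only [mem_sphere_iff_norm, sub_zero] at this ⊢
    simp [this]⟩

noncomputable section SphereDev
open Metric Set unitInterval

local notation "E3" => EuclideanSpace ℝ (Fin 3)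

abbrev TS : Type := TwoSphere

lemma TS.norm_eq (x : TS) : ‖(x : E3)‖ = 1 := norm_eq_of_mem_sphere x

/-- normalization map -/
def nz (v : E3) : E3 := ‖v‖⁻¹ • v

lemma nz_mem {v : E3} (hv : v ≠ 0) : nz v ∈ Metric.sphere (0 : E3) 1 := by
  simp only [mem_sphere_iff_norm, sub_zero, nz, norm_smul, norm_inv, norm_norm]
  field_simp [norm_ne_zero_iff.mpr hv]

lemma nz_of_norm_one {v : E3} (hv : ‖v‖ = 1) : nz v = v := by
  simp [nz, hv]

lemma nz_sub_self {v : E3} (hv : v ≠ 0) : ‖nz v - v‖ = |1 - ‖v‖| := by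
  have hn : ‖v‖ ≠ 0 := norm_ne_zero_iff.mpr hv
  have key : (1 - ‖v‖) * ‖v‖⁻¹ = ‖v‖⁻¹ - 1 := by
    rw [sub_mul, one_mul, mul_inv_cancel₀ hn]
  have h : nz v - v = ((1 - ‖v‖) * ‖v‖⁻¹) • v := by
    rw [key, sub_smul, one_smul, nz]
  rw [h, norm_smul, Real.norm_eq_abs, abs_mul, abs_inv, abs_norm, mul_assoc,
    inv_mul_cancel₀ hn, mul_one]

lemma cont_nz_comp {Y : Type*} [TopologicalSpace Y] {f : Y → E3} (hf : Continuous f)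
    (h0 : ∀ y, f y ≠ 0) : Continuous fun y => nz (f y) :=
  (hf.norm.inv₀ fun y => norm_ne_zero_iff.mpr (h0 y)).smul hf

lemma homotopic_of_dist_lt {x y : TS} (p q : Path x y)
    (h : ∀ t, ‖(p t : E3) - q t‖ < 1) : Path.Homotopic p q := by
  set g : I × I → E3 := fun st =>
    (1 - (st.1 : ℝ)) • (p st.2 : E3) + (st.1 : ℝ) • (q st.2 : E3) with hg
  have hne : ∀ st : I × I, g st ≠ 0 := by
    intro ⟨s, t⟩
    have h1 : g (s, t) = (p t : E3) + (s : ℝ) • ((q t : E3) - (p t : E3)) := by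
      simp only [hg, smul_sub, sub_smul, one_smul]; abel
    have h2 : ‖(s : ℝ) • ((q t : E3) - (p t : E3))‖ < 1 := by
      rw [norm_smul, Real.norm_eq_abs, abs_of_nonneg s.2.1]
      calc (s : ℝ) * ‖(q t : E3) - (p t : E3)‖ ≤ 1 * ‖(q t : E3) - (p t : E3)‖ := by
            apply mul_le_mul_of_nonneg_right s.2.2 (norm_nonneg _)
        _ < 1 := by rw [one_mul, norm_sub_rev]; exact h t
    intro h0
    rw [h1] at h0
    have := norm_sub_norm_le (p t : E3) (-((s : ℝ) • ((q t : E3) - (p t : E3))))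
    rw [sub_neg_eq_add, h0, norm_zero, norm_neg, TS.norm_eq] at this
    linarith
  have hgc : Continuous g := by
    have hs : Continuous fun st : I × I => (st.1 : ℝ) :=
      continuous_subtype_val.comp continuous_fst
    have hp : Continuous fun st : I × I => (p st.2 : E3) :=
      continuous_subtype_val.comp (p.continuous.comp continuous_snd)
    have hq : Continuous fun st : I × I => (q st.2 : E3) :=
      continuous_subtype_val.comp (q.continuous.comp continuous_snd)
    exact ((continuous_const.sub hs).smul hp).add (hs.smul hq)
  refine ⟨{ toFun := fun st => ⟨nz (g st), nz_mem (hne st)⟩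
            continuous_toFun := (cont_nz_comp hgc hne).subtype_mk _
            map_zero_left := ?_
            map_one_left := ?_
            prop' := ?_ }⟩
  · intro t
    apply Subtype.ext
    simp only [hg]
    norm_num
    exact nz_of_norm_one (TS.norm_eq _)
  · intro t
    apply Subtype.ext
    simp only [hg]
    norm_num
    exact nz_of_norm_one (TS.norm_eq _)
  · intro s t ht
    apply Subtype.ext
    simp only [ContinuousMap.coe_mk]
    rcases ht with ht | ht <;> subst ht
    · show nz (g (s, 0)) = _
      have : g (s, 0) = (x : E3) := by
        simp only [hg, p.source, q.source, smul_sub, sub_smul, one_smul]; abel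
      rw [this]
      simp [Path.coe_toContinuousMap, p.source, nz_of_norm_one (TS.norm_eq x)]
    · show nz (g (s, 1)) = _
      have : g (s, 1) = (y : E3) := by
        simp only [hg, p.target, q.target, smul_sub, sub_smul, one_smul]; abel
      rw [this]
      simp [Path.coe_toContinuousMap, p.target, nz_of_norm_one (TS.norm_eq y)]

section chord
variable (x y : TS)

/-- the straight chord between x and y, before projection -/
def chd (t : I) : E3 := (1 - (t : ℝ)) • (x : E3) + (t : ℝ) • (y : E3)

lemma chd_sub (t : I) : (x : E3) - chd x y t = (t : ℝ) • ((x : E3) - y) := by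
  simp only [chd, smul_sub, sub_smul, one_smul]; abel

variable {x y}

lemma chd_ne_zero (hxy : ‖(x : E3) - y‖ < 1) (t : I) : chd x y t ≠ 0 := by
  intro h0
  have h1 := chd_sub x y t
  rw [h0, sub_zero] at h1
  have h2 := congrArg norm h1
  rw [TS.norm_eq, norm_smul, Real.norm_eq_abs, abs_of_nonneg t.2.1] at h2
  nlinarith [t.2.2, norm_nonneg ((x : E3) - y), t.2.1]

lemma chd_dist (hxy : ‖(x : E3) - y‖ < 1) (t : I) : ‖(x : E3) - chd x y t‖ < 1 := by
  rw [chd_sub, norm_smul, Real.norm_eq_abs, abs_of_nonneg t.2.1]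
  calc (t : ℝ) * ‖(x : E3) - y‖ ≤ 1 * ‖(x : E3) - y‖ :=
        mul_le_mul_of_nonneg_right t.2.2 (norm_nonneg _)
    _ < 1 := by rw [one_mul]; exact hxy

variable (hxy : ‖(x : E3) - y‖ < 1)

/-- the projected chord path from x to y -/
def chordPath : Path x y where
  toFun t := ⟨nz (chd x y t), nz_mem (chd_ne_zero hxy t)⟩
  continuous_toFun := by
    refine Continuous.subtype_mk (cont_nz_comp ?_ (chd_ne_zero hxy)) _
    exact ((continuous_const.sub continuous_subtype_val).smul continuous_const).add
      (continuous_subtype_val.smul continuous_const)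
  source' := by
    apply Subtype.ext
    show nz (chd x y 0) = _
    simp only [chd, Set.Icc.coe_zero, sub_zero, one_smul, zero_smul, add_zero]
    exact nz_of_norm_one (TS.norm_eq x)
  target' := by
    apply Subtype.ext
    show nz (chd x y 1) = _
    simp only [chd, Set.Icc.coe_one, sub_self, zero_smul, one_smul, zero_add]
    exact nz_of_norm_one (TS.norm_eq y)

lemma chordPath_mem_span (t : I) :
    ((chordPath hxy) t : E3) ∈ Submodule.span ℝ {(x : E3), (y : E3)} := by
  show nz (chd x y t) ∈ _
  apply Submodule.smul_mem
  exact Submodule.add_mem _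
    (Submodule.smul_mem _ _ (Submodule.subset_span (Set.mem_insert _ _)))
    (Submodule.smul_mem _ _ (Submodule.subset_span (Set.mem_insert_of_mem _ rfl)))

end chord

lemma coe_path_zero {x y : TS} (p : Path x y) : ((p 0 : TS) : E3) = x := by rw [p.source]
lemma coe_path_one {x y : TS} (p : Path x y) : ((p 1 : TS) : E3) = y := by rw [p.target]

lemma small_diam_hxy {x y : TS} (p : Path x y)
    (h : ∀ s t : I, ‖(p s : E3) - p t‖ < 2⁻¹) : ‖(x : E3) - y‖ < 1 := by
  have := h 0 1
  rw [coe_path_zero, coe_path_one] at this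
  linarith

lemma homotopic_chordPath {x y : TS} (p : Path x y)
    (h : ∀ s t : I, ‖(p s : E3) - p t‖ < 2⁻¹) :
    Path.Homotopic p (chordPath (small_diam_hxy p h)) := by
  have hxy := small_diam_hxy p h
  apply homotopic_of_dist_lt
  intro t
  show ‖(p t : E3) - nz (chd x y t)‖ < 1
  have hx : ‖(p t : E3) - x‖ < 2⁻¹ := by
    have := h t 0; rwa [coe_path_zero] at this
  have hy : ‖(p t : E3) - y‖ < 2⁻¹ := by
    have := h t 1; rwa [coe_path_one] at this
  have hA : ‖(p t : E3) - chd x y t‖ ≤ 2⁻¹ := by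
    have hrep : (p t : E3) - chd x y t =
        (1 - (t : ℝ)) • ((p t : E3) - x) + (t : ℝ) • ((p t : E3) - y) := by
      simp only [chd, smul_sub, sub_smul, one_smul]; abel
    rw [hrep]
    calc ‖(1 - (t : ℝ)) • ((p t : E3) - x) + (t : ℝ) • ((p t : E3) - y)‖
        ≤ ‖(1 - (t : ℝ)) • ((p t : E3) - x)‖ + ‖(t : ℝ) • ((p t : E3) - y)‖ :=
          norm_add_le _ _
      _ ≤ (1 - (t : ℝ)) * 2⁻¹ + (t : ℝ) * 2⁻¹ := by
          rw [norm_smul, norm_smul, Real.norm_eq_abs, Real.norm_eq_abs,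
            abs_of_nonneg t.2.1, abs_of_nonneg (by linarith [t.2.2] : (0:ℝ) ≤ 1 - t)]
          gcongr <;> first | exact hx.le | exact hy.le | linarith [t.2.1, t.2.2]
      _ = 2⁻¹ := by ring
  have hxc : ‖(x : E3) - chd x y t‖ < 2⁻¹ := by
    rw [chd_sub, norm_smul, Real.norm_eq_abs, abs_of_nonneg t.2.1]
    have h1 : ‖(x : E3) - y‖ < 2⁻¹ := by
      have := h 0 1; rwa [coe_path_zero, coe_path_one] at this
    nlinarith [t.2.1, t.2.2, norm_nonneg ((x : E3) - y)]
  have hB : ‖chd x y t - nz (chd x y t)‖ < 2⁻¹ := by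
    rw [norm_sub_rev, nz_sub_self (chd_ne_zero hxy t)]
    have := abs_norm_sub_norm_le ((x : E3)) (chd x y t)
    rw [TS.norm_eq] at this
    calc |1 - ‖chd x y t‖| = |‖(x : E3)‖ - ‖chd x y t‖| := by rw [TS.norm_eq]
      _ ≤ ‖(x : E3) - chd x y t‖ := abs_norm_sub_norm_le _ _
      _ < 2⁻¹ := hxc
  calc ‖(p t : E3) - nz (chd x y t)‖
      ≤ ‖(p t : E3) - chd x y t‖ + ‖chd x y t - nz (chd x y t)‖ := norm_sub_le_norm_sub_add_norm_sub _ _ _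
    _ < 2⁻¹ + 2⁻¹ := by linarith
    _ = 1 := by norm_num

section halves
variable {x y : TS} (p : Path x y)

def midpt : TS := p.extend (1/2)

def firstHalf : Path x (midpt p) where
  toFun t := p.extend ((t : ℝ) / 2)
  continuous_toFun := p.continuous_extend.comp (continuous_subtype_val.div_const 2)
  source' := by
    show p.extend (((0 : I) : ℝ) / 2) = x
    norm_num
  target' := by
    show p.extend (((1 : I) : ℝ) / 2) = midpt p
    norm_num [midpt]

def secondHalf : Path (midpt p) y where
  toFun t := p.extend (((t : ℝ) + 1) / 2)
  continuous_toFun := p.continuous_extend.comp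
    ((continuous_subtype_val.add continuous_const).div_const 2)
  source' := by
    show p.extend ((((0 : I) : ℝ) + 1) / 2) = midpt p
    norm_num [midpt]
  target' := by
    show p.extend ((((1 : I) : ℝ) + 1) / 2) = y
    norm_num

lemma halves_trans : (firstHalf p).trans (secondHalf p) = p := by
  refine Path.ext (funext fun t => ?_)
  rw [Path.trans_apply]
  split_ifs with h'
  · show p.extend ((2 * (t : ℝ)) / 2) = p t
    rw [show (2 * (t : ℝ)) / 2 = (t : ℝ) by ring]
    exact p.extend_extends' ⟨(t : ℝ), t.2⟩
  · show p.extend (((2 * (t : ℝ) - 1) + 1) / 2) = p t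
    rw [show ((2 * (t : ℝ) - 1) + 1) / 2 = (t : ℝ) by ring]
    exact p.extend_extends' ⟨(t : ℝ), t.2⟩

end halves

lemma approx (k : ℕ) : ∀ (x y : TS) (p : Path x y),
    (∀ s t : I, |(s : ℝ) - t| ≤ 2⁻¹ ^ k → ‖(p s : E3) - p t‖ < 2⁻¹) →
    ∃ q : Path x y, Path.Homotopic p q ∧ ∃ Ps : Set (Submodule ℝ E3),
      Ps.Finite ∧ (∀ P ∈ Ps, P ≠ ⊤) ∧ ∀ t : I, ∃ P ∈ Ps, (q t : E3) ∈ P := by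
  induction k with
  | zero =>
    intro x y p h
    have hd : ∀ s t : I, ‖(p s : E3) - p t‖ < 2⁻¹ := by
      intro s t
      apply h
      rw [pow_zero, abs_le]
      constructor <;> linarith [s.2.1, s.2.2, t.2.1, t.2.2]
    classical
    refine ⟨chordPath (small_diam_hxy p hd), homotopic_chordPath p hd,
      {Submodule.span ℝ {(x : E3), (y : E3)}}, Set.finite_singleton _, ?_, ?_⟩
    · rintro P rfl
      apply ne_of_lt
      apply span_lt_top_of_card_lt_finrank
      rw [finrank_euclideanSpace_fin]
      calc ({(x : E3), (y : E3)} : Set E3).toFinset.card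
          ≤ ({(y : E3)} : Set E3).toFinset.card + 1 := by
            rw [Set.toFinset_insert]; exact Finset.card_insert_le _ _
        _ ≤ 2 := by simp
        _ < 3 := by norm_num
    · intro t
      exact ⟨_, rfl, chordPath_mem_span _ t⟩
  | succ k ih =>
    intro x y p h
    have h1 : ∀ s t : I, |(s : ℝ) - t| ≤ 2⁻¹ ^ k → ‖((firstHalf p) s : E3) - (firstHalf p) t‖ < 2⁻¹ := by
      intro s t hst
      have ms : (s : ℝ) / 2 ∈ I := ⟨by linarith [s.2.1], by linarith [s.2.2]⟩
      have mt : (t : ℝ) / 2 ∈ I := ⟨by linarith [t.2.1], by linarith [t.2.2]⟩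
      show ‖((p.extend ((s : ℝ) / 2) : TS) : E3) - (p.extend ((t : ℝ) / 2) : TS)‖ < 2⁻¹
      rw [p.extend_apply ms, p.extend_apply mt]
      apply h
      show |(s : ℝ) / 2 - (t : ℝ) / 2| ≤ _
      rw [div_sub_div_same, abs_div, abs_of_pos (by norm_num : (0:ℝ) < 2), pow_succ]
      calc |(s : ℝ) - t| / 2 ≤ 2⁻¹ ^ k / 2 := by linarith
        _ = 2⁻¹ ^ k * 2⁻¹ := by ring
    have h2 : ∀ s t : I, |(s : ℝ) - t| ≤ 2⁻¹ ^ k → ‖((secondHalf p) s : E3) - (secondHalf p) t‖ < 2⁻¹ := by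
      intro s t hst
      have ms : ((s : ℝ) + 1) / 2 ∈ I := ⟨by linarith [s.2.1], by linarith [s.2.2]⟩
      have mt : ((t : ℝ) + 1) / 2 ∈ I := ⟨by linarith [t.2.1], by linarith [t.2.2]⟩
      show ‖((p.extend (((s : ℝ) + 1) / 2) : TS) : E3) - (p.extend (((t : ℝ) + 1) / 2) : TS)‖ < 2⁻¹
      rw [p.extend_apply ms, p.extend_apply mt]
      apply h
      show |((s : ℝ) + 1) / 2 - ((t : ℝ) + 1) / 2| ≤ _
      rw [div_sub_div_same, show (s : ℝ) + 1 - ((t : ℝ) + 1) = (s : ℝ) - t by ring,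
        abs_div, abs_of_pos (by norm_num : (0:ℝ) < 2), pow_succ]
      calc |(s : ℝ) - t| / 2 ≤ 2⁻¹ ^ k / 2 := by linarith
        _ = 2⁻¹ ^ k * 2⁻¹ := by ring
    obtain ⟨q1, hq1, Ps1, hf1, hp1, hm1⟩ := ih _ _ (firstHalf p) h1
    obtain ⟨q2, hq2, Ps2, hf2, hp2, hm2⟩ := ih _ _ (secondHalf p) h2
    refine ⟨q1.trans q2, ?_, Ps1 ∪ Ps2, hf1.union hf2, ?_, ?_⟩
    · have hh := Path.Homotopic.hcomp hq1 hq2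
      rwa [halves_trans p] at hh
    · rintro P (hP | hP)
      exacts [hp1 P hP, hp2 P hP]
    · intro t
      have : (q1.trans q2) t ∈ Set.range q1 ∪ Set.range q2 := by
        rw [← Path.trans_range]
        exact Set.mem_range_self t
      rcases this with ⟨t', ht'⟩ | ⟨t', ht'⟩
      · obtain ⟨P, hP, hm⟩ := hm1 t'
        exact ⟨P, Or.inl hP, by rw [← ht']; exact hm⟩
      · obtain ⟨P, hP, hm⟩ := hm2 t'
        exact ⟨P, Or.inr hP, by rw [← ht']; exact hm⟩

lemma exists_modulus {x y : TS} (p : Path x y) :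
    ∃ k : ℕ, ∀ s t : I, |(s : ℝ) - t| ≤ 2⁻¹ ^ k → ‖(p s : E3) - p t‖ < 2⁻¹ := by
  have hu : UniformContinuous p := CompactSpace.uniformContinuous_of_continuous p.continuous
  obtain ⟨δ, hδ, hδ'⟩ := Metric.uniformContinuous_iff.mp hu 2⁻¹ (by norm_num)
  obtain ⟨k, hk⟩ := exists_pow_lt_of_lt_one hδ (by norm_num : (2⁻¹ : ℝ) < 1)
  refine ⟨k, fun s t hst => ?_⟩
  have h1 : dist s t < δ := by
    rw [Subtype.dist_eq, Real.dist_eq]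
    exact lt_of_le_of_lt hst hk
  have := hδ' h1
  rwa [Subtype.dist_eq, dist_eq_norm] at this

lemma exists_avoid (Ps : Set (Submodule ℝ E3)) (hf : Ps.Finite) (hp : ∀ P ∈ Ps, P ≠ ⊤) :
    ∃ w : TS, ∀ P ∈ Ps, (w : E3) ∉ P := by
  rcases Set.eq_empty_or_nonempty Ps with rfl | ⟨P0, hP0⟩
  · obtain ⟨w, hw⟩ : ∃ w : E3, w ∈ Metric.sphere (0 : E3) 1 := by
      refine ⟨nz (EuclideanSpace.single 0 1), nz_mem ?_⟩
      intro h
      have := congrArg (fun v : E3 => v (0 : Fin 3)) h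
      simp [EuclideanSpace.single] at this
    exact ⟨⟨w, hw⟩, by simp⟩
  · have hD : Dense (⋂ P ∈ Ps, ((P : Set E3)ᶜ)) := by
      haveI : Countable ↥Ps := hf.countable
      rw [Set.biInter_eq_iInter]
      apply dense_iInter_of_isOpen
      · intro P
        exact (Submodule.closed_of_finiteDimensional P.1).isOpen_compl
      · intro P
        rw [← interior_eq_empty_iff_dense_compl]
        by_contra hne
        rw [← Set.not_nonempty_iff_eq_empty, not_not] at hne
        exact hp P.1 P.2 (Submodule.eq_top_of_nonempty_interior' _ hne)
    obtain ⟨v, hv⟩ := hD.nonempty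
    have hv' : ∀ P ∈ Ps, v ∉ P := by
      intro P hP
      exact (Set.mem_iInter₂.mp hv P hP)
    have hv0 : v ≠ 0 := by
      intro h0
      exact hv' P0 hP0 (h0 ▸ (Submodule.zero_mem P0))
    refine ⟨⟨nz v, nz_mem hv0⟩, fun P hP hmem => ?_⟩
    apply hv' P hP
    have : v = ‖v‖ • nz v := by
      rw [nz, smul_smul, mul_inv_cancel₀ (norm_ne_zero_iff.mpr hv0), one_smul]
    rw [this]
    exact Submodule.smul_mem _ _ hmem

lemma punctured_simply_connected (w : TS) : SimplyConnectedSpace {z : TS // z ≠ w} := by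
  have hv : ‖(w : E3)‖ = 1 := TS.norm_eq w
  let e := stereographic hv
  have hsrc : e.source = {z : TS | z ≠ w} := by
    have hw : (⟨(w : E3), by simp [hv]⟩ : TS) = w := Subtype.ext rfl
    show ({(⟨(w : E3), by simp [hv]⟩ : TS)}ᶜ : Set TS) = {z : TS | z ≠ w}
    rw [hw]
    rfl
  have h1 : {z : TS // z ≠ w} ≃ₜ ↥e.source := Homeomorph.setCongr hsrc.symm
  have h2 : ↥e.source ≃ₜ ↥e.target := e.toHomeomorphSourceTarget
  have h3 : ↥e.target ≃ₜ (ℝ ∙ (w : E3))ᗮ := by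
    have ht : e.target = Set.univ := rfl
    exact (Homeomorph.setCongr ht).trans (Homeomorph.Set.univ _)
  have hc : ContractibleSpace {z : TS // z ≠ w} :=
    ((h1.trans h2).trans h3).contractibleSpace
  infer_instance

instance TS.simplyConnected : SimplyConnectedSpace TS := by
  rw [simply_connected_iff_paths_homotopic']
  constructor
  · rw [← isPathConnected_iff_pathConnectedSpace]
    apply isPathConnected_sphere ?_ (0 : E3) zero_le_one
    rw [← Module.finrank_eq_rank, finrank_euclideanSpace_fin]
    norm_cast
  · intro a b p₁ p₂
    -- the loop
    set L : Path a a := p₁.trans p₂.symm with hL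
    obtain ⟨k, hk⟩ := exists_modulus L
    obtain ⟨q, hpq, Ps, hf, hp, hm⟩ := approx k a a L hk
    obtain ⟨w, hw⟩ := exists_avoid Ps hf hp
    have hqw : ∀ t, q t ≠ w := by
      intro t heq
      obtain ⟨P, hP, hmem⟩ := hm t
      exact hw P hP (by rw [← heq]; exact hmem)
    have ha : a ≠ w := by
      have := hqw 0
      rwa [q.source] at this
    let q' : Path (⟨a, ha⟩ : {z : TS // z ≠ w}) ⟨a, ha⟩ :=
      { toFun := fun t => ⟨q t, hqw t⟩
        continuous_toFun := q.continuous.subtype_mk _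
        source' := Subtype.ext q.source
        target' := Subtype.ext q.target }
    have hnull' : Path.Homotopic q' (Path.refl (⟨a, ha⟩ : {z : TS // z ≠ w})) :=
      haveI := punctured_simply_connected w
      SimplyConnectedSpace.paths_homotopic q' (Path.refl _)
    have hnull : Path.Homotopic q (Path.refl a) := by
      have hmap := Path.Homotopic.map hnull'
        (⟨fun z => (z : TS), continuous_subtype_val⟩ : C({z : TS // z ≠ w}, TS))
      have e1 : q'.map continuous_subtype_val = q := Path.ext (funext fun t => rfl)
      have e2 : (Path.refl (⟨a, ha⟩ : {z : TS // z ≠ w})).map continuous_subtype_val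
          = Path.refl a := Path.ext (funext fun t => rfl)
      rwa [e1, e2] at hmap
    have hLr : Path.Homotopic L (Path.refl a) := hpq.trans hnull
    have s1 : Path.Homotopic ((Path.refl a).trans p₂) p₂ := ⟨Path.Homotopy.reflTrans p₂⟩
    have s2 : Path.Homotopic (L.trans p₂) ((Path.refl a).trans p₂) :=
      Path.Homotopic.hcomp hLr (Path.Homotopic.refl p₂)
    have s3 : Path.Homotopic (L.trans p₂) (p₁.trans (p₂.symm.trans p₂)) :=
      ⟨Path.Homotopy.transAssoc p₁ p₂.symm p₂⟩
    have s4 : Path.Homotopic (p₂.symm.trans p₂) (Path.refl b) :=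
      Path.Homotopic.symm ⟨Path.Homotopy.reflSymmTrans p₂⟩
    have s5 : Path.Homotopic (p₁.trans (p₂.symm.trans p₂)) (p₁.trans (Path.refl b)) :=
      Path.Homotopic.hcomp (Path.Homotopic.refl p₁) s4
    have s6 : Path.Homotopic (p₁.trans (Path.refl b)) p₁ := ⟨Path.Homotopy.transRefl p₁⟩
    exact ((((s1.symm.trans s2.symm).trans s3).trans s5).trans s6).symm

end SphereDev

attribute [local instance] Path.Homotopic.setoid

lemma TS.homSubsingleton (a b : FundamentalGroupoid TwoSphere) : Subsingleton (a ⟶ b) :=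
  inferInstanceAs (Subsingleton (Path.Homotopic.Quotient a.as b.as))

lemma TS.homNonempty (a b : FundamentalGroupoid TwoSphere) : Nonempty (a ⟶ b) :=
  ⟨⟦PathConnectedSpace.somePath a.as b.as⟧⟩

lemma QHom_ext {Γ : Type*} [Group Γ] {C : Type*} [Groupoid C] {A : GroupoidAction Γ C}
    {x y : C} (hsub : ∀ a b : C, Subsingleton (a ⟶ b)) (f g : QHom A x y)
    (h : f.1 = g.1) : f = g := by
  obtain ⟨σ, α⟩ := f
  obtain ⟨τ, β⟩ := g
  dsimp at h
  subst h
  exact congrArg (Sigma.mk σ) ((hsub _ _).elim α β)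

/-- Consider the action of `ℤ/2` on the 2-sphere `S²` via the antipodal
involution, and the associated action on the fundamental groupoid `Π₁(S²)`: for any
action `A` of `ℤ/2` on `Π₁(S²)` whose nontrivial element acts on objects (points) by the
antipodal map, the fixed point set `(S²)^{ℤ/2}` is empty, while the set of conjugacy
classes of sections of the Grothendieck exact sequence
`1 → π₁(S²,x) → Q(Π₁(S²),ℤ/2,x) → ℤ/2 → 1` is a singleton: a section exists and any two
sections are conjugate by an element of `π₁(S²,x)`.  Hence the section map
`π₀((S²)^{ℤ/2}) → Sec(Π₁(S²),ℤ/2)` is not surjective. -/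
theorem antipodal_sphere_counterexample
    (A : GroupoidAction (Multiplicative (ZMod 2)) (FundamentalGroupoid TwoSphere))
    (hA : ∀ z : FundamentalGroupoid TwoSphere,
      (A.act (Multiplicative.ofAdd (1 : ZMod 2))).obj z = ⟨antipodal z.as⟩)
    (x : FundamentalGroupoid TwoSphere) :
    -- the action has no fixed point
    (∀ z : FundamentalGroupoid TwoSphere,
        ¬ (∀ σ : Multiplicative (ZMod 2), (A.act σ).obj z = z)) ∧
    -- there exists a (group-theoretic) section of the Grothendieck exact sequence
    (∃ s : Multiplicative (ZMod 2) → QHom A x x,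
        (∀ σ, (s σ).1 = σ) ∧
        ∀ σ τ, Qcomp (s σ) (s τ) = s (σ * τ)) ∧
    -- and any two sections are conjugate, i.e. `Sec(Π₁(S²),ℤ/2)` is a singleton
    (∀ s s' : Multiplicative (ZMod 2) → QHom A x x,
        ((∀ σ, (s σ).1 = σ) ∧ ∀ σ τ, Qcomp (s σ) (s τ) = s (σ * τ)) →
        ((∀ σ, (s' σ).1 = σ) ∧ ∀ σ τ, Qcomp (s' σ) (s' τ) = s' (σ * τ)) →
        ∃ γ : x ⟶ x, ∀ σ,
          s' σ = Qcomp (Qcomp (Qof A (Groupoid.inv γ)) (s σ)) (Qof A γ)) := by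
  refine ⟨?_, ?_, ?_⟩
  · -- no fixed points
    intro z hz
    have h1 := hz (Multiplicative.ofAdd (1 : ZMod 2))
    rw [hA z] at h1
    have h2 : antipodal z.as = z.as := congrArg FundamentalGroupoid.as h1
    have h3 : -(z.as : EuclideanSpace ℝ (Fin 3)) = (z.as : EuclideanSpace ℝ (Fin 3)) :=
      congrArg Subtype.val h2
    have h4 : (z.as : EuclideanSpace ℝ (Fin 3)) = 0 := by
      have h5 : (2 : ℝ) • (z.as : EuclideanSpace ℝ (Fin 3)) = 0 := by
        rw [two_smul]
        nth_rewrite 1 [← h3]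
        abel
      rcases smul_eq_zero.mp h5 with h | h
      · norm_num at h
      · exact h
    have h6 := TS.norm_eq z.as
    rw [h4, norm_zero] at h6
    norm_num at h6
  · -- a section exists
    refine ⟨fun σ => ⟨σ, (TS.homNonempty _ _).some⟩, fun σ => rfl,
      fun σ τ => QHom_ext TS.homSubsingleton _ _ rfl⟩
  · -- any two sections are conjugate
    intro s s' hs hs'
    refine ⟨𝟙 x, fun σ => QHom_ext TS.homSubsingleton _ _ ?_⟩
    show (s' σ).1 = (1 * (s σ).1) * 1
    rw [hs.1 σ, hs'.1 σ, one_mul, mul_one]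
end

section
/- Let Γ be a profinite group and S ⊆ Γ a subset not containing 1. Endow the Cayley graph (Γ, Γ × S, s, t) where s(γ,a) = γ and t(γ,a) = γ·a with the topology on (Γ × S) ⊔ Γ ≅ Γ × (S ∪ {1}) induced from the product topology. Then this profinite Cayley graph is a split profinite graph if and only if 1 does not lie in the closure of S. -/
open Set
open scoped Set.Notation

lemma isClosed_preimage_val_insert_iff {X : Type*} [TopologicalSpace X] {S : Set X} {x : X}
    (hx : x ∉ S) : IsClosed (insert x S ↓∩ S) ↔ x ∉ closure S := by
  rw [isClosed_preimage_val, inter_eq_right.mpr (subset_insert x S)]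
  refine ⟨fun h hxS => hx (h ⟨mem_insert x S, hxS⟩), fun h a ⟨ha, haS⟩ => ?_⟩
  rcases ha with rfl | ha
  exacts [absurd haS h, ha]

/-- The slice through `y` is a continuous section of the projection to `A`. -/
lemma isClosed_setOf_snd_mem_iff {Y X : Type*} [TopologicalSpace Y] [TopologicalSpace X]
    (y : Y) {A : Set X} (S : Set X) :
    IsClosed {p : {p : Y × X // p.2 ∈ A} | (p : Y × X).2 ∈ S} ↔ IsClosed (A ↓∩ S) := by
  let proj : {p : Y × X // p.2 ∈ A} → A := fun p => ⟨(p : Y × X).2, p.2⟩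
  let slice : A → {p : Y × X // p.2 ∈ A} := fun a => ⟨(y, a), a.2⟩
  have hproj : Continuous proj := by fun_prop
  have hslice : Continuous slice := by fun_prop
  exact ⟨fun h => h.preimage hslice, fun h => h.preimage hproj⟩

theorem profinite_cayley_graph_split_iff_general {Γ : Type*} [Group Γ] [TopologicalSpace Γ]
    [T2Space Γ] [IsTopologicalGroup Γ]
    (S : Set Γ) (hS : (1 : Γ) ∉ S) :
    -- the vertex set `Γ × {1}` is closed in `T = Γ × (S ∪ {1})`
    IsClosed {p : {p : Γ × Γ // p.2 ∈ insert (1 : Γ) S} | (p : Γ × Γ).2 = 1} ∧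
    -- the extended source map is continuous
    Continuous (fun p : {p : Γ × Γ // p.2 ∈ insert (1 : Γ) S} => (p : Γ × Γ).1) ∧
    -- the extended target map is continuous
    Continuous (fun p : {p : Γ × Γ // p.2 ∈ insert (1 : Γ) S} =>
      (p : Γ × Γ).1 * (p : Γ × Γ).2) ∧
    -- splitness criterion
    (IsClosed {p : {p : Γ × Γ // p.2 ∈ insert (1 : Γ) S} | (p : Γ × Γ).2 ∈ S} ↔
      (1 : Γ) ∉ closure S) :=
  ⟨isClosed_eq continuous_subtype_val.snd continuous_const, continuous_subtype_val.fst,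
    continuous_subtype_val.fst.mul continuous_subtype_val.snd,
    (isClosed_setOf_snd_mem_iff 1 S).trans (isClosed_preimage_val_insert_iff hS)⟩

/-- Let `Γ` be a profinite group and `S ⊆ Γ` a subset not containing `1`.
Consider the Cayley graph of `Γ` with respect to `S`: its vertex set is `Γ`, its edge set
is `Γ × S`, with source `s(γ,a) = γ` and target `t(γ,a) = γ·a`.  Identify the disjoint
union `(Γ × S) ⊔ Γ` with the subspace `T = Γ × (S ∪ {1})` of `Γ × Γ` (the vertex `γ`
corresponding to `(γ,1)` and the edge `(γ,a)` to `(γ,a)`), with its induced topology.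
Then this is a profinite graph: the vertex set is closed and the extended source and
target maps `T → Γ` (given by `(γ,a) ↦ γ` and `(γ,a) ↦ γ·a`, which are the identity on
the vertex part) are continuous; moreover it is a *split* profinite graph (i.e. the edge
set is also closed in `T`) if and only if `1` does not lie in the closure of `S`. -/
theorem profinite_cayley_graph_split_iff {Γ : Type*} [Group Γ] [TopologicalSpace Γ]
    [CompactSpace Γ] [T2Space Γ] [TotallyDisconnectedSpace Γ] [IsTopologicalGroup Γ]
    (S : Set Γ) (hS : (1 : Γ) ∉ S) :
    -- the vertex set `Γ × {1}` is closed in `T = Γ × (S ∪ {1})`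
    IsClosed {p : {p : Γ × Γ // p.2 ∈ insert (1 : Γ) S} | (p : Γ × Γ).2 = 1} ∧
    -- the extended source map is continuous
    Continuous (fun p : {p : Γ × Γ // p.2 ∈ insert (1 : Γ) S} => (p : Γ × Γ).1) ∧
    -- the extended target map is continuous
    Continuous (fun p : {p : Γ × Γ // p.2 ∈ insert (1 : Γ) S} =>
      (p : Γ × Γ).1 * (p : Γ × Γ).2) ∧
    -- splitness criterion
    (IsClosed {p : {p : Γ × Γ // p.2 ∈ insert (1 : Γ) S} | (p : Γ × Γ).2 ∈ S} ↔
      (1 : Γ) ∉ closure S) :=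
  profinite_cayley_graph_split_iff_general S hS
end
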